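/- arXiv:1908.11012 — 5 statements merged into one kernel-verified Lean document; each statement's English description precedes it below -/
import Mathlib

section
/- Fix a natural number m ≥ 1 and let H = {x ∈ ℝ^{m+1} : Σ_{i=0}^{m} x_i = 0}, equipped with the inner product inherited from the standard Euclidean inner product on ℝ^{m+1}. For a linear isometry A of H onto itself, the following are equivalent: (a) Σ_{i=0}^{m} ((A x)_i)^3 = Σ_{i=0}^{m} x_i^3 for every x ∈ H; (b) there exists a permutation σ of {0,…,m} such that (A x)_i = x_{σ(i)} for every x ∈ H and every index i. Consequently, the group of linear isometries of H preserving the cubic form x ↦ Σ_{i=0}^{m} x_i^3 is isomorphic to the symmetric group S_{m+1}. -/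
/-!
Polarizing the cubic form, an isometry `A` of `H` preserving it also preserves
`∑ xⱼ² zⱼ` for all `x z ∈ H`. The simplex vertices `wᵢ = eᵢ - 𝟙 / (m + 1)` are then characterized
intrinsically as the `x ∈ H` with `‖x‖² = m / (m + 1)` and `∑ xⱼ² zⱼ = (m - 1) / (m + 1) ⟪x, z⟫`
for all `z ∈ H`: testing against `z = wⱼ` shows that `uⱼ = xⱼ + 1 / (m + 1)` satisfies `uⱼ² = uⱼ`,
while `∑ uⱼ = 1`, so `u` is a standard basis vector. Hence `A` permutes the `wᵢ`, and since
`xⱼ = ⟪x, wⱼ⟫` on `H`, it permutes the coordinates.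
-/

open scoped RealInnerProductSpace

open scoped BigOperators

noncomputable section

/-- The hyperplane `{x ∈ ℝ^{m+1} : ∑ xᵢ = 0}`, as a submodule of Euclidean space
(hence inheriting the standard inner product). -/
def zeroSumHyperplane (m : ℕ) : Submodule ℝ (EuclideanSpace ℝ (Fin (m + 1))) where
  carrier := {x | ∑ i, x i = 0}
  add_mem' := by
    intro a b ha hb
    simp only [Set.mem_setOf_eq, PiLp.add_apply] at *
    rw [Finset.sum_add_distrib, ha, hb, add_zero]
  zero_mem' := by
    simp only [Set.mem_setOf_eq, PiLp.zero_apply, Finset.sum_const_zero]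
  smul_mem' := by
    intro c a ha
    simp only [Set.mem_setOf_eq, PiLp.smul_apply, smul_eq_mul] at *
    rw [← Finset.mul_sum, ha, mul_zero]

/-- The group of linear isometries of the zero-sum hyperplane preserving the cubic form
`x ↦ ∑ xᵢ³`. -/
def cubicPreserving (m : ℕ) :
    Subgroup ((zeroSumHyperplane m) ≃ₗᵢ[ℝ] (zeroSumHyperplane m)) where
  carrier := {A | ∀ x : zeroSumHyperplane m,
    ∑ i, ((A x : EuclideanSpace ℝ (Fin (m + 1))) i) ^ 3
      = ∑ i, ((x : EuclideanSpace ℝ (Fin (m + 1))) i) ^ 3}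
  one_mem' := by intro x; rfl
  mul_mem' := by
    intro A B hA hB x
    exact (hA (B x)).trans (hB x)
  inv_mem' := by
    intro A hA x
    have h := hA (A.symm x)
    rw [LinearIsometryEquiv.apply_symm_apply] at h
    exact h.symm

local notation "E" m:max => EuclideanSpace ℝ (Fin (m + 1))

open Finset

theorem exists_eq_single_of_sq_eq_self {ι R : Type*} [Fintype ι] [DecidableEq ι] [CommRing R]
    [LinearOrder R] [IsStrictOrderedRing R] {u : ι → R} (hsq : ∀ j, u j ^ 2 = u j)
    (hsum : ∑ j, u j = 1) : ∃ i, u = Pi.single i 1 := by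
  have hnonneg (j : ι) : 0 ≤ u j := hsq j ▸ sq_nonneg (u j)
  obtain ⟨i, hi⟩ : ∃ i, u i ≠ 0 := by
    by_contra! h
    simp [h] at hsum
  have hui : u i = 1 := by
    have : u i * (u i - 1) = 0 := by linear_combination hsq i
    exact sub_eq_zero.1 ((mul_eq_zero.1 this).resolve_left hi)
  have hrest : ∑ j ∈ univ.erase i, u j = 0 := by
    rw [← add_sum_erase _ _ (mem_univ i), hui] at hsum
    linarith
  refine ⟨i, funext fun j => ?_⟩
  rcases eq_or_ne j i with rfl | hji
  · simp [hui]
  · rw [Pi.single_eq_of_ne hji]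
    exact (sum_eq_zero_iff_of_nonneg fun j _ => hnonneg j).1 hrest j (by simp [hji])

theorem six_mul_sum_sq_mul {ι R : Type*} [Fintype ι] [CommRing R] (x y : ι → R) :
    6 * ∑ j, x j ^ 2 * y j = ∑ j, (x j + y j) ^ 3 - ∑ j, (x j - y j) ^ 3 - 2 * ∑ j, y j ^ 3 := by
  simp only [mul_sum, ← sum_sub_distrib]
  exact sum_congr rfl fun j _ => by ring

namespace zeroSumHyperplane

variable {m : ℕ}

theorem sum_coe_eq_zero (x : zeroSumHyperplane m) : ∑ i, (x : E m) i = 0 := x.2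

theorem inner_eq_sum (x y : zeroSumHyperplane m) :
    ⟪x, y⟫ = ∑ i, (x : E m) i * (y : E m) i := by
  simp [Submodule.coe_inner, PiLp.inner_apply, mul_comm]

theorem norm_sq_eq_sum (x : zeroSumHyperplane m) : ‖x‖ ^ 2 = ∑ i, (x : E m) i ^ 2 := by
  rw [← real_inner_self_eq_norm_sq, inner_eq_sum]
  simp only [sq]

def vertex (i : Fin (m + 1)) : zeroSumHyperplane m :=
  ⟨WithLp.toLp 2 fun j => (if j = i then 1 else 0) - 1 / (m + 1), by
    change ∑ j, ((if j = i then 1 else 0) - 1 / ((m : ℝ) + 1)) = 0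
    simp only [sum_sub_distrib, sum_ite_eq', mem_univ, ↓reduceIte, sum_const, card_univ,
      Fintype.card_fin, nsmul_eq_mul, Nat.cast_add, Nat.cast_one]
    field_simp
    ring⟩

theorem vertex_apply (i j : Fin (m + 1)) :
    (vertex i : E m) j = (if j = i then 1 else 0) - 1 / (m + 1) := rfl

theorem inner_vertex (x : zeroSumHyperplane m) (j : Fin (m + 1)) :
    ⟪x, vertex j⟫ = (x : E m) j := by
  rw [inner_eq_sum]
  simp [vertex_apply, mul_sub, sum_sub_distrib, ← sum_mul, sum_coe_eq_zero]

theorem vertex_injective : Function.Injective (vertex (m := m)) := by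
  intro i k h
  by_contra hik
  have := congrArg (fun v : zeroSumHyperplane m => (v : E m) i) h
  simp [vertex_apply, hik] at this

theorem norm_vertex_sq (i : Fin (m + 1)) : ‖vertex (m := m) i‖ ^ 2 = m / (m + 1) := by
  rw [← real_inner_self_eq_norm_sq, inner_vertex, vertex_apply, if_pos rfl]
  field_simp
  ring

theorem sum_vertex_sq_mul (i : Fin (m + 1)) (z : zeroSumHyperplane m) :
    ∑ j, (vertex i : E m) j ^ 2 * (z : E m) j = (m - 1) / (m + 1) * ⟪vertex i, z⟫ := by
  rw [real_inner_comm, inner_vertex]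
  have (j : Fin (m + 1)) : (vertex i : E m) j ^ 2 * (z : E m) j
      = (if j = i then (m - 1) / (m + 1) * (z : E m) j else 0) + 1 / (m + 1) ^ 2 * (z : E m) j := by
    rw [vertex_apply]
    split_ifs <;> field_simp <;> ring
  simp [this, sum_add_distrib, ← mul_sum, sum_coe_eq_zero]

theorem sum_sq_mul_vertex (x : zeroSumHyperplane m) (j : Fin (m + 1)) :
    ∑ k, (x : E m) k ^ 2 * (vertex j : E m) k = (x : E m) j ^ 2 - ‖x‖ ^ 2 / (m + 1) := by
  rw [norm_sq_eq_sum]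
  simp [vertex_apply, mul_sub, sum_sub_distrib, ← sum_mul, div_eq_mul_inv]

theorem exists_eq_vertex (x : zeroSumHyperplane m) (hnorm : ‖x‖ ^ 2 = m / (m + 1))
    (heig : ∀ z : zeroSumHyperplane m,
      ∑ j, (x : E m) j ^ 2 * (z : E m) j = (m - 1) / (m + 1) * ⟪x, z⟫) :
    ∃ i, x = vertex i := by
  set u : Fin (m + 1) → ℝ := fun j => (x : E m) j + 1 / (m + 1)
  have hsq (j : Fin (m + 1)) : u j ^ 2 = u j := by
    have := heig (vertex j)
    rw [sum_sq_mul_vertex, inner_vertex, hnorm] at this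
    simp only [u]
    field_simp at this ⊢
    linear_combination this
  have hsum : ∑ j, u j = 1 := by
    simp only [u, sum_add_distrib, sum_coe_eq_zero, sum_const, card_univ, Fintype.card_fin,
      nsmul_eq_mul, Nat.cast_add, Nat.cast_one, zero_add]
    field_simp
  obtain ⟨i, hi⟩ := exists_eq_single_of_sq_eq_self hsq hsum
  refine ⟨i, Subtype.ext (PiLp.ext fun j => ?_)⟩
  have := congrFun hi j
  simp only [u, Pi.single_apply] at this
  rw [vertex_apply, ← this]
  ring

theorem sum_sq_mul_map {A : zeroSumHyperplane m ≃ₗᵢ[ℝ] zeroSumHyperplane m}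
    (hA : A ∈ cubicPreserving m) (x y : zeroSumHyperplane m) :
    ∑ j, (A x : E m) j ^ 2 * (A y : E m) j = ∑ j, (x : E m) j ^ 2 * (y : E m) j := by
  have hadd := hA (x + y)
  have hsub := hA (x - y)
  simp only [map_add, map_sub, Submodule.coe_add, Submodule.coe_sub, PiLp.add_apply,
    PiLp.sub_apply] at hadd hsub
  linarith [hA y, six_mul_sum_sq_mul (fun j => (A x : E m) j) (fun j => (A y : E m) j),
    six_mul_sum_sq_mul (fun j => (x : E m) j) (fun j => (y : E m) j)]

theorem exists_map_vertex_eq_vertex {A : zeroSumHyperplane m ≃ₗᵢ[ℝ] zeroSumHyperplane m}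
    (hA : A ∈ cubicPreserving m) (i : Fin (m + 1)) : ∃ k, A (vertex i) = vertex k := by
  refine exists_eq_vertex _ (by rw [A.norm_map, norm_vertex_sq]) fun z => ?_
  have hz := sum_sq_mul_map hA (vertex i) (A.symm z)
  rw [A.apply_symm_apply] at hz
  rw [hz, sum_vertex_sq_mul, ← A.inner_map_map, A.apply_symm_apply]

theorem exists_perm_of_mem_cubicPreserving
    {A : zeroSumHyperplane m ≃ₗᵢ[ℝ] zeroSumHyperplane m} (hA : A ∈ cubicPreserving m) :
    ∃ σ : Equiv.Perm (Fin (m + 1)), ∀ x i, (A x : E m) i = (x : E m) (σ i) := by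
  choose f hf using exists_map_vertex_eq_vertex (A := A.symm) (inv_mem hA)
  have hf_inj : Function.Injective f := fun i k hik =>
    vertex_injective (A.symm.injective (by rw [hf, hf, hik]))
  refine ⟨Equiv.ofBijective f hf_inj.bijective_of_finite, fun x i => ?_⟩
  calc (A x : E m) i = ⟪A x, vertex i⟫ := (inner_vertex _ _).symm
    _ = ⟪x, A.symm (vertex i)⟫ := by rw [← A.inner_map_map x, A.apply_symm_apply]
    _ = (x : E m) (f i) := by rw [hf i, inner_vertex]

theorem mem_cubicPreserving_iff_exists_perm
    {A : zeroSumHyperplane m ≃ₗᵢ[ℝ] zeroSumHyperplane m} :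
    A ∈ cubicPreserving m ↔
      ∃ σ : Equiv.Perm (Fin (m + 1)), ∀ x i, (A x : E m) i = (x : E m) (σ i) := by
  refine ⟨exists_perm_of_mem_cubicPreserving, fun ⟨σ, hσ⟩ x => ?_⟩
  simp only [hσ]
  exact Equiv.sum_comp σ fun i => (x : E m) i ^ 3

theorem map_piLpCongrLeft (σ : Equiv.Perm (Fin (m + 1))) :
    Submodule.map (LinearIsometryEquiv.piLpCongrLeft 2 ℝ ℝ σ).toLinearEquiv.toLinearMap
      (zeroSumHyperplane m) = zeroSumHyperplane m := by
  ext y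
  rw [Submodule.map_equiv_eq_comap_symm, Submodule.mem_comap]
  simp [zeroSumHyperplane, Equiv.sum_comp σ fun i => y i]

def permIsometry :
    Equiv.Perm (Fin (m + 1)) →* (zeroSumHyperplane m ≃ₗᵢ[ℝ] zeroSumHyperplane m) where
  toFun σ :=
    { toLinearEquiv := (LinearIsometryEquiv.piLpCongrLeft 2 ℝ ℝ σ).toLinearEquiv.ofSubmodules _ _
        (map_piLpCongrLeft σ)
      norm_map' x := (LinearIsometryEquiv.piLpCongrLeft 2 ℝ ℝ σ).norm_map x }
  map_one' := by ext x i; rfl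
  map_mul' σ τ := by ext x i; rfl

theorem permIsometry_apply (σ : Equiv.Perm (Fin (m + 1))) (x : zeroSumHyperplane m)
    (i : Fin (m + 1)) : (permIsometry σ x : E m) i = (x : E m) (σ⁻¹ i) :=
  rfl

theorem eq_of_forall_apply_eq {j k : Fin (m + 1)}
    (h : ∀ x : zeroSumHyperplane m, (x : E m) j = (x : E m) k) : j = k :=
  vertex_injective (ext_inner_left ℝ fun x => by rw [inner_vertex, inner_vertex, h])

theorem permIsometry_injective : Function.Injective (permIsometry (m := m)) := fun σ τ h =>
  inv_injective <| Equiv.ext fun i => eq_of_forall_apply_eq fun x => by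
    rw [← permIsometry_apply, ← permIsometry_apply, h]

theorem range_permIsometry : (permIsometry (m := m)).range = cubicPreserving m := by
  ext A
  rw [mem_cubicPreserving_iff_exists_perm, MonoidHom.mem_range]
  constructor
  · rintro ⟨σ, rfl⟩
    exact ⟨σ⁻¹, permIsometry_apply σ⟩
  · rintro ⟨σ, hσ⟩
    refine ⟨σ⁻¹, ?_⟩
    ext x i
    rw [permIsometry_apply, inv_inv, hσ]

end zeroSumHyperplane

theorem cubic_preserving_isometries_eq_symmetricGroup_general (m : ℕ) :
    (∀ A : (zeroSumHyperplane m) ≃ₗᵢ[ℝ] (zeroSumHyperplane m),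
      (∀ x : zeroSumHyperplane m,
        ∑ i, ((A x : EuclideanSpace ℝ (Fin (m + 1))) i) ^ 3
          = ∑ i, ((x : EuclideanSpace ℝ (Fin (m + 1))) i) ^ 3)
      ↔ (∃ σ : Equiv.Perm (Fin (m + 1)), ∀ (x : zeroSumHyperplane m) (i : Fin (m + 1)),
          (A x : EuclideanSpace ℝ (Fin (m + 1))) i
            = (x : EuclideanSpace ℝ (Fin (m + 1))) (σ i))) ∧
    Nonempty (cubicPreserving m ≃* Equiv.Perm (Fin (m + 1))) :=
  ⟨fun _ => zeroSumHyperplane.mem_cubicPreserving_iff_exists_perm,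
    ⟨((MonoidHom.ofInjective zeroSumHyperplane.permIsometry_injective).trans
      (MulEquiv.subgroupCongr zeroSumHyperplane.range_permIsometry)).symm⟩⟩

/-- a linear isometry of the zero-sum hyperplane preserves the cubic form
`x ↦ ∑ xᵢ³` iff it is induced by a permutation of the `m+1` coordinates; consequently the
group of such isometries is isomorphic to `S_{m+1}`. -/
theorem cubic_preserving_isometries_eq_symmetricGroup (m : ℕ) (hm : 1 ≤ m) :
    (∀ A : (zeroSumHyperplane m) ≃ₗᵢ[ℝ] (zeroSumHyperplane m),
      (∀ x : zeroSumHyperplane m,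
        ∑ i, ((A x : EuclideanSpace ℝ (Fin (m + 1))) i) ^ 3
          = ∑ i, ((x : EuclideanSpace ℝ (Fin (m + 1))) i) ^ 3)
      ↔ (∃ σ : Equiv.Perm (Fin (m + 1)), ∀ (x : zeroSumHyperplane m) (i : Fin (m + 1)),
          (A x : EuclideanSpace ℝ (Fin (m + 1))) i
            = (x : EuclideanSpace ℝ (Fin (m + 1))) (σ i))) ∧
    Nonempty (cubicPreserving m ≃* Equiv.Perm (Fin (m + 1))) :=
  cubic_preserving_isometries_eq_symmetricGroup_general m

end
end

section
/- Fix a natural number m ≥ 1. For a vector x ∈ ℝ^{m+1} the following are equivalent: (a) Σ_{i=0}^{m} x_i = 0, Σ_{i=0}^{m} x_i^2 = m(m+1), there exist real numbers a and b such that 3 x_i^2 = a + 2 b x_i for every i, and for every nonzero v ∈ ℝ^{m+1} satisfying Σ_i v_i = 0 and Σ_i x_i v_i = 0 one has Σ_i x_i v_i^2 < 0; (b) there exists an index j ∈ {0,…,m} such that x_j = m and x_i = −1 for all i ≠ j. -/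
open scoped BigOperators

/-- classification of the strong constrained maxima of the cubic
`x ↦ ∑ xᵢ³` on the sphere `∑ xᵢ = 0`, `∑ xᵢ² = m(m+1)` in `ℝ^{m+1}`. -/
theorem strong_maxima_of_cubic (m : ℕ) (hm : 1 ≤ m) (x : Fin (m + 1) → ℝ) :
    ((∑ i, x i = 0) ∧
      (∑ i, (x i) ^ 2 = (m : ℝ) * (m + 1)) ∧
      (∃ a b : ℝ, ∀ i, 3 * (x i) ^ 2 = a + 2 * b * x i) ∧
      (∀ v : Fin (m + 1) → ℝ, v ≠ 0 → (∑ i, v i = 0) → (∑ i, x i * v i = 0) →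
        ∑ i, x i * (v i) ^ 2 < 0))
    ↔ (∃ j : Fin (m + 1), x j = (m : ℝ) ∧ ∀ i, i ≠ j → x i = -1) := by
  have hm1 : (1:ℝ) ≤ (m:ℝ) := by exact_mod_cast hm
  constructor
  · rintro ⟨h0, h2, ⟨a, b, hab⟩, hneg⟩
    -- duplicated values are negative
    have dup : ∀ i k : Fin (m+1), i ≠ k → x i = x k → x i < 0 := by
      intro i k hik heq
      set v : Fin (m+1) → ℝ := fun t => (if t = i then (1:ℝ) else 0) - (if t = k then 1 else 0) with hv
      have hvne : v ≠ 0 := by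
        intro h
        have := congrFun h i
        simp [hv, hik] at this
      have hv0 : ∑ t, v t = 0 := by simp [hv, Finset.sum_sub_distrib]
      have hv1 : ∑ t, x t * v t = 0 := by
        simp [hv, mul_sub, mul_ite, Finset.sum_sub_distrib, heq]
      have hv2 : ∑ t, x t * (v t)^2 = x i + x k := by
        have key : ∀ t, x t * (v t)^2
            = (if t = i then x i else 0) + (if t = k then x k else 0) := by
          intro t
          rcases eq_or_ne t i with h1 | h1
          · subst h1; simp [hv, hik]
          · rcases eq_or_ne t k with h2 | h2
            · subst h2; simp [hv, h1, hik, Ne.symm hik]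
            · simp [hv, h1, h2]
        simp [key, Finset.sum_add_distrib]
      have := hneg v hvne hv0 hv1
      rw [hv2, ← heq] at this
      linarith
    -- at most two values
    have vieta : ∀ s t : Fin (m+1), x s ≠ x t → 3 * (x s + x t) = 2 * b := by
      intro s t hst
      have h : (x s - x t) * (3 * (x s + x t) - 2 * b) = 0 := by
        linear_combination hab s - hab t
      rcases mul_eq_zero.1 h with h | h
      · exact absurd (by linarith) hst
      · linarith
    have twoval : ∀ i k l : Fin (m+1), x i ≠ x k → x l = x i ∨ x l = x k := by
      intro i k l hik
      by_contra h
      push_neg at h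
      have h1 := vieta l i (fun e => h.1 e)
      have h2 := vieta l k (fun e => h.2 e)
      exact hik (by linarith)
    -- pick the max
    obtain ⟨j, -, hj⟩ := Finset.exists_max_image (Finset.univ : Finset (Fin (m+1))) x
      ⟨0, Finset.mem_univ 0⟩
    -- the max is attained only once
    have huniq : ∀ i, i ≠ j → x i ≠ x j := by
      intro i hij heq
      have hjneg : x j < 0 := heq ▸ dup i j hij heq
      have : ∑ i, x i < 0 := by
        calc ∑ i, x i ≤ ∑ _i : Fin (m+1), x j :=
              Finset.sum_le_sum (fun t _ => hj t (Finset.mem_univ t))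
        _ = (m+1 : ℕ) * x j := by simp [mul_comm]
        _ < 0 := by
            apply mul_neg_of_pos_of_neg _ hjneg
            positivity
      linarith
    -- all non-max entries are equal
    have hsame : ∀ i k : Fin (m+1), i ≠ j → k ≠ j → x i = x k := by
      intro i k hij hkj
      by_contra hne
      rcases twoval i k j hne with h | h
      · exact huniq i hij h.symm
      · exact huniq k hkj h.symm
    -- pick a non-max index
    have : Nontrivial (Fin (m+1)) := Fin.nontrivial_iff_two_le.2 (by omega)
    obtain ⟨i0, hi0⟩ := exists_ne j
    set q := x i0 with hq
    have hallq : ∀ i, i ≠ j → x i = q := fun i hij => hsame i i0 hij hi0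
    -- sum identities
    have hsum1 : x j + (m:ℝ) * q = 0 := by
      have e1 : ∑ i, x i = x j + ∑ i ∈ Finset.univ.erase j, x i :=
        (Finset.add_sum_erase _ _ (Finset.mem_univ j)).symm
      have e2 : ∑ i ∈ Finset.univ.erase j, x i = (m:ℝ) * q := by
        rw [Finset.sum_congr rfl (fun i hi => hallq i (Finset.mem_erase.1 hi).1)]
        simp [Finset.card_erase_of_mem, mul_comm]
      rw [e1, e2] at h0
      linarith
    have hsum2 : (x j)^2 + (m:ℝ) * q^2 = (m:ℝ) * (m+1) := by
      have e1 : ∑ i, (x i)^2 = (x j)^2 + ∑ i ∈ Finset.univ.erase j, (x i)^2 :=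
        (Finset.add_sum_erase _ _ (Finset.mem_univ j)).symm
      have e2 : ∑ i ∈ Finset.univ.erase j, (x i)^2 = (m:ℝ) * q^2 := by
        rw [Finset.sum_congr rfl (fun i hi => by rw [hallq i (Finset.mem_erase.1 hi).1])]
        simp [Finset.card_erase_of_mem, mul_comm]
      rw [e1, e2] at h2
      linarith
    have hxj : x j = -((m:ℝ) * q) := by linarith
    have hq1 : q^2 = 1 := by
      have hmpos : (0:ℝ) < (m:ℝ) * ((m:ℝ)+1) := by positivity
      have h' : (m:ℝ) * ((m:ℝ)+1) * q^2 = (m:ℝ) * ((m:ℝ)+1) * 1 := by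
        rw [hxj] at hsum2; nlinarith [hsum2]
      exact mul_left_cancel₀ (ne_of_gt hmpos) h'
    have : (q - 1) * (q + 1) = 0 := by nlinarith
    rcases mul_eq_zero.1 this with h | h
    · -- q = 1, impossible: x j = -m < q but j is max
      have hq' : q = 1 := by linarith
      have : x i0 ≤ x j := hj i0 (Finset.mem_univ i0)
      rw [← hq, hq', hxj, hq'] at this
      linarith
    · -- q = -1
      have hq' : q = -1 := by linarith
      refine ⟨j, ?_, fun i hij => by rw [hallq i hij, hq']⟩
      rw [hxj, hq']; ring
  · rintro ⟨j, hj, hji⟩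
    have cerase : (Finset.univ.erase j).card = m := by
      simp [Finset.card_erase_of_mem]
    refine ⟨?_, ?_, ⟨3 * (m:ℝ), 3 * ((m:ℝ) - 1) / 2, ?_⟩, ?_⟩
    · rw [← Finset.add_sum_erase _ _ (Finset.mem_univ j), hj,
        Finset.sum_congr rfl (fun i hi => hji i (Finset.mem_erase.1 hi).1)]
      simp [cerase]
    · rw [← Finset.add_sum_erase _ _ (Finset.mem_univ j), hj,
        Finset.sum_congr rfl (fun i hi => by rw [hji i (Finset.mem_erase.1 hi).1])]
      simp [cerase]; ring
    · intro i
      by_cases h : i = j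
      · rw [h, hj]; ring
      · rw [hji i h]; ring
    · intro v hvne hv0 hv1
      have hsv : ∑ i ∈ Finset.univ.erase j, v i = -(v j) := by
        have := Finset.add_sum_erase Finset.univ v (Finset.mem_univ j)
        rw [hv0] at this; linarith
      have hvj : v j = 0 := by
        rw [← Finset.add_sum_erase _ _ (Finset.mem_univ j), hj,
          Finset.sum_congr rfl (fun i hi => by rw [hji i (Finset.mem_erase.1 hi).1])] at hv1
        simp only [neg_one_mul, Finset.sum_neg_distrib, hsv] at hv1
        have : ((m:ℝ) + 1) * v j = 0 := by linarith
        have hm0 : (m:ℝ) + 1 ≠ 0 := by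
          have : (0:ℝ) < (m:ℝ) + 1 := by positivity
          exact this.ne'
        exact (mul_eq_zero.1 this).resolve_left hm0
      have : ∑ i, x i * (v i)^2 = -(∑ i ∈ Finset.univ.erase j, (v i)^2) := by
        rw [← Finset.add_sum_erase _ _ (Finset.mem_univ j), hj, hvj,
          Finset.sum_congr rfl (fun i hi => by rw [hji i (Finset.mem_erase.1 hi).1])]
        simp [Finset.sum_neg_distrib]
      rw [this, neg_lt, neg_zero]
      obtain ⟨i, hi⟩ := Function.ne_iff.1 hvne
      have hij : i ≠ j := by
        intro h; rw [h, hvj] at hi; simp at hi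
      apply Finset.sum_pos' (fun t _ => sq_nonneg (v t))
      exact ⟨i, Finset.mem_erase.2 ⟨hij, Finset.mem_univ i⟩, pow_two_pos_of_ne_zero hi⟩
end

section
/- Fix m ≥ 1, let (e_1,…,e_m) be the standard orthonormal basis of Euclidean ℝ^m, and let τ = Σ_{i=1}^{m} e_i ⊗ e_i ⊗ e_i ∈ ℝ^m ⊗ ℝ^m ⊗ ℝ^m. For linear isometries A, B, C of ℝ^m, the equality Σ_{i=1}^{m} A e_i ⊗ B e_i ⊗ C e_i = τ holds if and only if there exist a permutation σ of {1,…,m} and functions ε, η : {1,…,m} → {+1,−1} such that for every i: A e_i = ε_i e_{σ(i)}, B e_i = η_i e_{σ(i)}, and C e_i = ε_i η_i e_{σ(i)}. -/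
/-!
Write `uᵢ = A eᵢ`, `vᵢ = B eᵢ`, `wᵢ = C eᵢ`. Contracting the first tensor factor of both sides
against `u_p`, orthonormality of the `uᵢ` collapses the left side to `v_p ⊗ w_p`, while the right
side becomes the diagonal tensor `∑ᵢ (u_p)ᵢ eᵢ ⊗ eᵢ`. A product `v_p ⊗ w_p` of nonzero vectors is
diagonal only if both are multiples of one `e_k`, and then `u_p` is the product of their `k`-th
coordinates times `e_k`. Unit norms force these coefficients to be `±1`, and orthogonality of the
`vᵢ` makes `p ↦ k` injective, hence a permutation.
-/

open scoped TensorProduct InnerProductSpace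

section Contraction

variable {E F : Type*} [NormedAddCommGroup E] [InnerProductSpace ℝ E] [AddCommGroup F]
  [Module ℝ F]

noncomputable def innerContractLeft (x : E) : E ⊗[ℝ] F →ₗ[ℝ] F :=
  TensorProduct.lid ℝ F ∘ₗ (innerₛₗ ℝ x).rTensor F

@[simp]
lemma innerContractLeft_tmul (x u : E) (f : F) :
    innerContractLeft x (u ⊗ₜ f) = ⟪x, u⟫_ℝ • f := by
  simp [innerContractLeft]

lemma Orthonormal.innerContractLeft_sum_tmul {ι : Type*} [Fintype ι] {u : ι → E}
    (hu : Orthonormal ℝ u) (f : ι → F) (p : ι) :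
    innerContractLeft (u p) (∑ i, u i ⊗ₜ f i) = f p := by
  classical
  simp [orthonormal_iff_ite.mp hu]

end Contraction

lemma Pi.exists_forall_ne_eq_zero_of_mul_eq_zero {ι R : Type*} [MulZeroClass R]
    [NoZeroDivisors R] {y z : ι → R} (hy : y ≠ 0) (hz : z ≠ 0)
    (h : ∀ k l, k ≠ l → y k * z l = 0) :
    ∃ k, ∀ l ≠ k, y l = 0 ∧ z l = 0 := by
  obtain ⟨k, hk⟩ := Function.ne_iff.mp hy
  have hz' : ∀ l ≠ k, z l = 0 := fun l hl => (mul_eq_zero.mp (h k l hl.symm)).resolve_left hk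
  obtain ⟨k', hk'⟩ := Function.ne_iff.mp hz
  obtain rfl : k' = k := by_contra fun hne => hk' (hz' k' hne)
  exact ⟨k', fun l hl => ⟨(mul_eq_zero.mp (h l k' hl)).resolve_right hk', hz' l hl⟩⟩

namespace EuclideanSpace

variable {ι : Type*} [DecidableEq ι]

lemma eq_smul_single_of_forall_ne {x : EuclideanSpace ℝ ι} {k : ι} (h : ∀ l ≠ k, x l = 0) :
    x = x k • single k 1 := by
  ext l
  by_cases hl : l = k <;> simp [hl, h]

variable [Fintype ι]

lemma eq_one_or_eq_neg_one_of_norm_smul_single {c : ℝ} {k : ι}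
    (h : ‖c • single k (1 : ℝ)‖ = 1) : c = 1 ∨ c = -1 := by
  simpa [norm_smul, abs_eq zero_le_one] using h

lemma innerContractLeft_sum_single_tmul {F : Type*} [AddCommGroup F] [Module ℝ F]
    (x : EuclideanSpace ℝ ι) (f : ι → F) :
    innerContractLeft x (∑ i, single i 1 ⊗ₜ f i) = ∑ i, x i • f i := by
  simp [inner_single_right]

lemma apply_mul_apply_of_tmul_eq_sum {y z : EuclideanSpace ℝ ι} {d : ι → ℝ}
    (h : y ⊗ₜ[ℝ] z = ∑ i, d i • (single i 1 ⊗ₜ[ℝ] single i 1)) (k l : ι) :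
    y k * z l = if k = l then d k else 0 := by
  set β := (basisFun ι ℝ).toBasis
  have hkl := congrArg (fun t => (β.tensorProduct β).repr t (k, l)) h
  simp only [β, Module.Basis.tensorProduct_repr_tmul_apply, map_sum, map_smul] at hkl
  rcases eq_or_ne k l with rfl | hne
  · simpa [Finset.sum_apply, mul_comm] using hkl
  · simpa [Finset.sum_apply, mul_comm, hne, hne.symm] using hkl

lemma exists_signed_single_of_sum_tmul_eq {u v w : ι → EuclideanSpace ℝ ι}
    (hu : Orthonormal ℝ u) (hv : ∀ i, ‖v i‖ = 1) (hw : ∀ i, ‖w i‖ = 1)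
    (h : ∑ i, u i ⊗ₜ[ℝ] (v i ⊗ₜ[ℝ] w i) = ∑ i, single i 1 ⊗ₜ[ℝ] (single i 1 ⊗ₜ[ℝ] single i 1))
    (p : ι) :
    ∃ (k : ι) (ε η : ℝ), (ε = 1 ∨ ε = -1) ∧ (η = 1 ∨ η = -1) ∧
      u p = ε • single k 1 ∧ v p = η • single k 1 ∧ w p = (ε * η) • single k 1 := by
  have hslice : v p ⊗ₜ[ℝ] w p = ∑ i, u p i • (single i 1 ⊗ₜ[ℝ] single i 1) := by
    rw [← hu.innerContractLeft_sum_tmul (fun i => v i ⊗ₜ w i), h,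
      innerContractLeft_sum_single_tmul]
  have hcoord := apply_mul_apply_of_tmul_eq_sum hslice
  have ne_zero_of_norm (x : EuclideanSpace ℝ ι) (hx : ‖x‖ = 1) : ⇑x ≠ 0 := fun h0 => by
    simp [show x = 0 by simpa using h0] at hx
  obtain ⟨k, hk⟩ := Pi.exists_forall_ne_eq_zero_of_mul_eq_zero (ne_zero_of_norm _ (hv p))
    (ne_zero_of_norm _ (hw p))
    fun k l hkl => by simpa [hkl] using hcoord k l
  have hvk := eq_smul_single_of_forall_ne fun l hl => (hk l hl).1
  have hwk := eq_smul_single_of_forall_ne fun l hl => (hk l hl).2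
  have huk : u p = (v p k * w p k) • single k 1 := by
    have hdiag (l : ι) : u p l = v p l * w p l := by simpa using (hcoord l l).symm
    rw [← hdiag]
    exact eq_smul_single_of_forall_ne fun l hl => by rw [hdiag, (hk l hl).1, zero_mul]
  have hη := eq_one_or_eq_neg_one_of_norm_smul_single (hvk ▸ hv p)
  have hζ := eq_one_or_eq_neg_one_of_norm_smul_single (hwk ▸ hw p)
  refine ⟨k, v p k * w p k, v p k, ?_, hη, huk, hvk, ?_⟩
  · rcases hη with h1 | h1 <;> rcases hζ with h2 | h2 <;> simp [h1, h2]
  · rw [hwk]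
    rcases hη with h1 | h1 <;> simp [h1]

lemma exists_perm_of_sum_tmul_eq {u v w : ι → EuclideanSpace ℝ ι}
    (hu : Orthonormal ℝ u) (hv : Orthonormal ℝ v) (hw : Orthonormal ℝ w)
    (h : ∑ i, u i ⊗ₜ[ℝ] (v i ⊗ₜ[ℝ] w i) = ∑ i, single i 1 ⊗ₜ[ℝ] (single i 1 ⊗ₜ[ℝ] single i 1)) :
    ∃ (σ : Equiv.Perm ι) (ε η : ι → ℝ), (∀ i, ε i = 1 ∨ ε i = -1) ∧ (∀ i, η i = 1 ∨ η i = -1) ∧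
      ∀ i, u i = ε i • single (σ i) 1 ∧ v i = η i • single (σ i) 1 ∧
        w i = (ε i * η i) • single (σ i) 1 := by
  choose σ ε η hε hη hσu hσv hσw using exists_signed_single_of_sum_tmul_eq hu hv.1 hw.1 h
  have hσ : Function.Injective σ := by
    intro p q hpq
    by_contra hne
    have hpq' : ⟪v p, v q⟫_ℝ = 0 := hv.2 hne
    rw [hσv p, hσv q, hpq, real_inner_smul_left, real_inner_smul_right] at hpq'
    rcases hη p with h1 | h1 <;> rcases hη q with h2 | h2 <;> simp [h1, h2] at hpq'
  exact ⟨Equiv.ofBijective σ hσ.bijective_of_finite, ε, η, hε, hη,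
    fun i => ⟨hσu i, hσv i, hσw i⟩⟩

lemma sum_tmul_eq_of_signed_perm {u v w : ι → EuclideanSpace ℝ ι} (σ : Equiv.Perm ι)
    {ε η : ι → ℝ} (hε : ∀ i, ε i = 1 ∨ ε i = -1) (hη : ∀ i, η i = 1 ∨ η i = -1)
    (h : ∀ i, u i = ε i • single (σ i) 1 ∧ v i = η i • single (σ i) 1 ∧
      w i = (ε i * η i) • single (σ i) 1) :
    ∑ i, u i ⊗ₜ[ℝ] (v i ⊗ₜ[ℝ] w i) = ∑ i, single i 1 ⊗ₜ[ℝ] (single i 1 ⊗ₜ[ℝ] single i 1) := by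
  have hterm (i : ι) : u i ⊗ₜ[ℝ] (v i ⊗ₜ[ℝ] w i)
      = single (σ i) 1 ⊗ₜ[ℝ] (single (σ i) 1 ⊗ₜ[ℝ] single (σ i) (1 : ℝ)) := by
    obtain ⟨hu, hv, hw⟩ := h i
    have hε' : ε i * ε i = 1 := mul_self_eq_one_iff.mpr (hε i)
    have hη' : η i * η i = 1 := mul_self_eq_one_iff.mpr (hη i)
    rw [hu, hv, hw]
    simp only [TensorProduct.smul_tmul, TensorProduct.tmul_smul, smul_smul]
    convert one_smul ℝ _ using 2
    linear_combination (η i * η i) * hε' + hη'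
  simp_rw [hterm]
  exact Equiv.sum_comp σ fun j => single j (1 : ℝ) ⊗ₜ[ℝ] (single j (1 : ℝ) ⊗ₜ[ℝ] single j (1 : ℝ))

end EuclideanSpace

theorem stabilizer_of_diagonal_tensor_general (m : ℕ)
    (A B C : EuclideanSpace ℝ (Fin m) ≃ₗᵢ[ℝ] EuclideanSpace ℝ (Fin m)) :
    (∑ i : Fin m,
        A (EuclideanSpace.single i (1 : ℝ)) ⊗ₜ[ℝ]
          (B (EuclideanSpace.single i (1 : ℝ)) ⊗ₜ[ℝ] C (EuclideanSpace.single i (1 : ℝ)))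
      = ∑ i : Fin m,
          EuclideanSpace.single i (1 : ℝ) ⊗ₜ[ℝ]
            (EuclideanSpace.single i (1 : ℝ) ⊗ₜ[ℝ] EuclideanSpace.single i (1 : ℝ)))
    ↔ ∃ (σ : Equiv.Perm (Fin m)) (ε η : Fin m → ℝ),
        (∀ i, ε i = 1 ∨ ε i = -1) ∧ (∀ i, η i = 1 ∨ η i = -1) ∧
        (∀ i, A (EuclideanSpace.single i (1 : ℝ)) = ε i • EuclideanSpace.single (σ i) (1 : ℝ)
          ∧ B (EuclideanSpace.single i (1 : ℝ)) = η i • EuclideanSpace.single (σ i) (1 : ℝ)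
          ∧ C (EuclideanSpace.single i (1 : ℝ))
              = (ε i * η i) • EuclideanSpace.single (σ i) (1 : ℝ)) := by
  have hframe (T : EuclideanSpace ℝ (Fin m) ≃ₗᵢ[ℝ] EuclideanSpace ℝ (Fin m)) :
      Orthonormal ℝ fun i => T (EuclideanSpace.single i (1 : ℝ)) :=
    EuclideanSpace.orthonormal_single.comp_linearIsometryEquiv T
  exact ⟨EuclideanSpace.exists_perm_of_sum_tmul_eq (hframe A) (hframe B) (hframe C),
    fun ⟨σ, _, _, hε, hη, h⟩ => EuclideanSpace.sum_tmul_eq_of_signed_perm σ hε hη h⟩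

/-- for linear isometries `A, B, C` of Euclidean `ℝ^m`, the tensor
`∑ᵢ Aeᵢ ⊗ Beᵢ ⊗ Ceᵢ` equals `τ = ∑ᵢ eᵢ ⊗ eᵢ ⊗ eᵢ` iff `A, B, C` are signed permutations
with a common underlying permutation `σ` and signs `ε, η, ε·η` respectively. -/
theorem stabilizer_of_diagonal_tensor (m : ℕ) (hm : 1 ≤ m)
    (A B C : EuclideanSpace ℝ (Fin m) ≃ₗᵢ[ℝ] EuclideanSpace ℝ (Fin m)) :
    (∑ i : Fin m,
        A (EuclideanSpace.single i (1 : ℝ)) ⊗ₜ[ℝ]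
          (B (EuclideanSpace.single i (1 : ℝ)) ⊗ₜ[ℝ] C (EuclideanSpace.single i (1 : ℝ)))
      = ∑ i : Fin m,
          EuclideanSpace.single i (1 : ℝ) ⊗ₜ[ℝ]
            (EuclideanSpace.single i (1 : ℝ) ⊗ₜ[ℝ] EuclideanSpace.single i (1 : ℝ)))
    ↔ ∃ (σ : Equiv.Perm (Fin m)) (ε η : Fin m → ℝ),
        (∀ i, ε i = 1 ∨ ε i = -1) ∧ (∀ i, η i = 1 ∨ η i = -1) ∧
        (∀ i, A (EuclideanSpace.single i (1 : ℝ)) = ε i • EuclideanSpace.single (σ i) (1 : ℝ)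
          ∧ B (EuclideanSpace.single i (1 : ℝ)) = η i • EuclideanSpace.single (σ i) (1 : ℝ)
          ∧ C (EuclideanSpace.single i (1 : ℝ))
              = (ε i * η i) • EuclideanSpace.single (σ i) (1 : ℝ)) :=
  stabilizer_of_diagonal_tensor_general m A B C
end

section
/- Fix m ≥ 1 and let w ∈ ℝ^m ⊗ ℝ^m ⊗ ℝ^m. Suppose that: (i) (P_σ ⊗ P_σ ⊗ P_σ) w = w for every permutation σ of {1,…,m}, where P_σ is the associated permutation matrix; and (ii) (D_j ⊗ D_j ⊗ 1) w = w and (D_j ⊗ 1 ⊗ D_j) w = w for every j ∈ {1,…,m}, where D_j is the diagonal matrix sending e_j to −e_j and fixing all other standard basis vectors. Then w is a real scalar multiple of Σ_{i=1}^{m} e_i ⊗ e_i ⊗ e_i. -/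
open scoped BigOperators TensorProduct

noncomputable section

/-- The linear map on Euclidean `ℝ^m` given by the permutation matrix of `σ`,
sending `e_j` to `e_{σ j}`. -/
def permLin (m : ℕ) (σ : Equiv.Perm (Fin m)) :
    EuclideanSpace ℝ (Fin m) →ₗ[ℝ] EuclideanSpace ℝ (Fin m) :=
  Matrix.toEuclideanLin (Matrix.of fun i j => if σ j = i then (1 : ℝ) else 0)

/-- The linear map on Euclidean `ℝ^m` given by the diagonal matrix sending `e_j` to
`−e_j` and fixing all other standard basis vectors. -/
def signFlip (m : ℕ) (j : Fin m) :
    EuclideanSpace ℝ (Fin m) →ₗ[ℝ] EuclideanSpace ℝ (Fin m) :=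
  Matrix.toEuclideanLin (Matrix.diagonal fun i => if i = j then (-1 : ℝ) else 1)

/-!
Expand `w` in the basis `e_a ⊗ e_b ⊗ e_c`. Each basis tensor is an eigenvector of every
`D_j ⊗ D_j ⊗ 1` and `D_j ⊗ 1 ⊗ D_j`; taking `j = a` gives eigenvalue `-1` on
`e_a ⊗ e_b ⊗ e_c` when `b ≠ a` (resp. `c ≠ a`), so invariance kills every coefficient off
the diagonal `a = b = c`. The permutations permute the basis tensors and act transitively on the
diagonal ones, so the diagonal coefficients all agree.
-/

open TensorProduct

namespace Module.Basis

variable {R N κ : Type*} [CommRing R] [AddCommGroup N] [Module R N] (B : Basis κ R N)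

theorem repr_apply_of_apply_basis_eq_smul {F : N →ₗ[R] N} {c : κ → R}
    (hF : ∀ q, F (B q) = c q • B q) (w : N) (p : κ) :
    B.repr (F w) p = c p * B.repr w p := by
  have key : Finsupp.lapply p ∘ₗ B.repr.toLinearMap ∘ₗ F =
      c p • (Finsupp.lapply p ∘ₗ B.repr.toLinearMap) :=
    B.ext fun q => by
      by_cases h : q = p
      · subst h; simp [hF]
      · simp [hF, h]
  exact LinearMap.congr_fun key w

theorem repr_apply_of_apply_basis_eq_basis {F : N →ₗ[R] N} {τ : κ ≃ κ}
    (hF : ∀ q, F (B q) = B (τ q)) (w : N) (p : κ) :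
    B.repr (F w) (τ p) = B.repr w p := by
  classical
  have key : Finsupp.lapply (τ p) ∘ₗ B.repr.toLinearMap ∘ₗ F =
      Finsupp.lapply p ∘ₗ B.repr.toLinearMap :=
    B.ext fun q => by simp [hF, Finsupp.single_apply]
  exact LinearMap.congr_fun key w

theorem repr_eq_zero_of_apply_basis_eq_smul_of_fixed [NoZeroDivisors R] [CharZero R]
    {F : N →ₗ[R] N} {c : κ → R} (hF : ∀ q, F (B q) = c q • B q) {w : N} (hw : F w = w)
    {p : κ} (hp : c p = -1) : B.repr w p = 0 := by
  have h := B.repr_apply_of_apply_basis_eq_smul hF w p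
  rw [hw, hp, neg_one_mul] at h
  exact CharZero.neg_eq_self_iff.1 h.symm

end Module.Basis

namespace TensorProduct

variable {R M ι : Type*} [CommRing R] [AddCommGroup M] [Module R M] (b : Module.Basis ι R M)

theorem map_map_basis_of_apply_basis_eq_smul {f g h : M →ₗ[R] M} {d₁ d₂ d₃ : ι → R}
    (hf : ∀ i, f (b i) = d₁ i • b i) (hg : ∀ i, g (b i) = d₂ i • b i)
    (hh : ∀ i, h (b i) = d₃ i • b i) (p : ι × ι × ι) :
    map f (map g h) (b.tensorProduct (b.tensorProduct b) p) =
      (d₁ p.1 * d₂ p.2.1 * d₃ p.2.2) • b.tensorProduct (b.tensorProduct b) p := by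
  simp only [Module.Basis.tensorProduct_apply', map_tmul, hf, hg, hh, tmul_smul, ← smul_tmul',
    smul_smul]
  congr 1
  ring

theorem map_map_basis_of_apply_basis_eq_basis {f : M →ₗ[R] M} {σ : Equiv.Perm ι}
    (hf : ∀ i, f (b i) = b (σ i)) (p : ι × ι × ι) :
    map f (map f f) (b.tensorProduct (b.tensorProduct b) p) =
      b.tensorProduct (b.tensorProduct b) (σ.prodCongr (σ.prodCongr σ) p) := by
  simp [Module.Basis.tensorProduct_apply', hf]

end TensorProduct

theorem Fintype.sum_eq_sum_diag_of_eq_zero_off_diag {ι N : Type*} [Fintype ι]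
    [AddCommMonoid N] (v : ι × ι × ι → N) (h₁ : ∀ p, p.1 ≠ p.2.1 → v p = 0)
    (h₂ : ∀ p, p.1 ≠ p.2.2 → v p = 0) :
    ∑ p, v p = ∑ i, v (i, i, i) := by
  simp only [Fintype.sum_prod_type]
  refine Fintype.sum_congr _ _ fun i => ?_
  rw [Fintype.sum_eq_single i fun j hj => Fintype.sum_eq_zero _ fun k => h₁ _ (Ne.symm hj),
    Fintype.sum_eq_single i fun k hk => h₂ _ (Ne.symm hk)]

theorem Equiv.Perm.exists_eq_const_of_invariant {ι α : Type*} [DecidableEq ι] [Nonempty α]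
    (f : ι → α) (hf : ∀ (σ : Equiv.Perm ι) i, f (σ i) = f i) : ∃ c, ∀ i, f i = c := by
  rcases isEmpty_or_nonempty ι with hι | ⟨⟨i₀⟩⟩
  · exact ⟨Classical.arbitrary α, isEmptyElim⟩
  · exact ⟨f i₀, fun i => by simpa using hf (Equiv.swap i₀ i) i₀⟩

section Euclidean

variable {m : ℕ}

theorem permLin_basisFun (σ : Equiv.Perm (Fin m)) (j : Fin m) :
    permLin m σ ((EuclideanSpace.basisFun (Fin m) ℝ).toBasis j) =
      (EuclideanSpace.basisFun (Fin m) ℝ).toBasis (σ j) := by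
  ext i
  simp [permLin, Matrix.mulVec, dotProduct, Pi.single_apply, eq_comm]

theorem signFlip_basisFun (j i : Fin m) :
    signFlip m j ((EuclideanSpace.basisFun (Fin m) ℝ).toBasis i) =
      (if i = j then (-1 : ℝ) else 1) • (EuclideanSpace.basisFun (Fin m) ℝ).toBasis i := by
  ext k
  simp only [PiLp.smul_apply, smul_eq_mul]
  by_cases h : k = i <;> simp [signFlip, Matrix.mulVec_diagonal, h]

end Euclidean

theorem fixed_tensor_is_multiple_of_diagonal_general (m : ℕ)
    (w : EuclideanSpace ℝ (Fin m) ⊗[ℝ]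
          (EuclideanSpace ℝ (Fin m) ⊗[ℝ] EuclideanSpace ℝ (Fin m)))
    (hperm : ∀ σ : Equiv.Perm (Fin m),
      TensorProduct.map (permLin m σ) (TensorProduct.map (permLin m σ) (permLin m σ)) w = w)
    (hflip₁ : ∀ j : Fin m,
      TensorProduct.map (signFlip m j) (TensorProduct.map (signFlip m j) LinearMap.id) w = w)
    (hflip₂ : ∀ j : Fin m,
      TensorProduct.map (signFlip m j) (TensorProduct.map LinearMap.id (signFlip m j)) w = w) :
    ∃ c : ℝ, w = c • ∑ i : Fin m,
      EuclideanSpace.single i (1 : ℝ) ⊗ₜ[ℝ]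
        (EuclideanSpace.single i (1 : ℝ) ⊗ₜ[ℝ] EuclideanSpace.single i (1 : ℝ)) := by
  set b := (EuclideanSpace.basisFun (Fin m) ℝ).toBasis
  set B := b.tensorProduct (b.tensorProduct b)
  have hid (i : Fin m) : LinearMap.id (R := ℝ) (b i) = (1 : ℝ) • b i := (one_smul ℝ _).symm
  have hoff₁ (p : Fin m × Fin m × Fin m) (hp : p.1 ≠ p.2.1) : B.repr w p = 0 :=
    B.repr_eq_zero_of_apply_basis_eq_smul_of_fixed (map_map_basis_of_apply_basis_eq_smul b
      (signFlip_basisFun p.1) (signFlip_basisFun p.1) hid) (hflip₁ p.1) (by simp [hp.symm])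
  have hoff₂ (p : Fin m × Fin m × Fin m) (hp : p.1 ≠ p.2.2) : B.repr w p = 0 :=
    B.repr_eq_zero_of_apply_basis_eq_smul_of_fixed (map_map_basis_of_apply_basis_eq_smul b
      (signFlip_basisFun p.1) hid (signFlip_basisFun p.1)) (hflip₂ p.1) (by simp [hp.symm])
  have hdiag (σ : Equiv.Perm (Fin m)) (i : Fin m) :
      B.repr w (σ i, σ i, σ i) = B.repr w (i, i, i) := by
    simpa [hperm σ] using B.repr_apply_of_apply_basis_eq_basis
      (map_map_basis_of_apply_basis_eq_basis b (permLin_basisFun σ)) w (i, i, i)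
  obtain ⟨c, hc⟩ := Equiv.Perm.exists_eq_const_of_invariant (fun i => B.repr w (i, i, i)) hdiag
  refine ⟨c, ?_⟩
  calc w = ∑ p, B.repr w p • B p := (B.sum_repr w).symm
    _ = ∑ i, B.repr w (i, i, i) • B (i, i, i) :=
      Fintype.sum_eq_sum_diag_of_eq_zero_off_diag _ (fun p hp => by rw [hoff₁ p hp, zero_smul])
        (fun p hp => by rw [hoff₂ p hp, zero_smul])
    _ = _ := by simp [hc, Finset.smul_sum, B, b, Module.Basis.tensorProduct_apply]

/-- a tensor `w ∈ ℝ^m ⊗ ℝ^m ⊗ ℝ^m` fixed by all simultaneous permutations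
`P_σ ⊗ P_σ ⊗ P_σ` and by all pairs of coordinate sign flips `D_j ⊗ D_j ⊗ 1`,
`D_j ⊗ 1 ⊗ D_j` is a scalar multiple of `∑ᵢ eᵢ ⊗ eᵢ ⊗ eᵢ`. -/
theorem fixed_tensor_is_multiple_of_diagonal (m : ℕ) (hm : 1 ≤ m)
    (w : EuclideanSpace ℝ (Fin m) ⊗[ℝ]
          (EuclideanSpace ℝ (Fin m) ⊗[ℝ] EuclideanSpace ℝ (Fin m)))
    (hperm : ∀ σ : Equiv.Perm (Fin m),
      TensorProduct.map (permLin m σ) (TensorProduct.map (permLin m σ) (permLin m σ)) w = w)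
    (hflip₁ : ∀ j : Fin m,
      TensorProduct.map (signFlip m j) (TensorProduct.map (signFlip m j) LinearMap.id) w = w)
    (hflip₂ : ∀ j : Fin m,
      TensorProduct.map (signFlip m j) (TensorProduct.map LinearMap.id (signFlip m j)) w = w) :
    ∃ c : ℝ, w = c • ∑ i : Fin m,
      EuclideanSpace.single i (1 : ℝ) ⊗ₜ[ℝ]
        (EuclideanSpace.single i (1 : ℝ) ⊗ₜ[ℝ] EuclideanSpace.single i (1 : ℝ)) :=
  fixed_tensor_is_multiple_of_diagonal_general m w hperm hflip₁ hflip₂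
end
end

section
/- Fix m ≥ 1 and let L = so(3,ℝ)^m be the direct product of m copies of the Lie algebra of 3×3 real skew-symmetric matrices, with componentwise bracket. For i ∈ {1,…,m} let L_i ⊆ L denote the i-th coordinate factor, i.e., L_i = {x ∈ L : x_j = 0 for all j ≠ i}. If K is a Lie subalgebra of L with dim K = 3 whose centralizer {y ∈ L : [y,k] = 0 for all k ∈ K} has dimension 3(m−1), then K = L_i for some i. -/
open Matrix DirectSum

attribute [local instance 100] LieRing.ofAssociativeRing

/-- `so(3,ℝ)`: the Lie algebra of `3×3` real skew-symmetric matrices, as a Lie subalgebra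
of the matrix algebra with the commutator bracket. -/
def so3 : LieSubalgebra ℝ (Matrix (Fin 3) (Fin 3) ℝ) :=
  { carrier := {A : Matrix (Fin 3) (Fin 3) ℝ | Aᵀ = -A}
    add_mem' := by
      intro A B hA hB
      simp only [Set.mem_setOf_eq] at *
      rw [Matrix.transpose_add, hA, hB, neg_add]
    zero_mem' := by
      simp only [Set.mem_setOf_eq, Matrix.transpose_zero, neg_zero]
    smul_mem' := by
      intro c A hA
      simp only [Set.mem_setOf_eq] at *
      rw [Matrix.transpose_smul, hA, smul_neg]
    lie_mem' := by
      intro A B hA hB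
      simp only [Set.mem_setOf_eq] at *
      rw [Ring.lie_def, Matrix.transpose_sub, Matrix.transpose_mul, Matrix.transpose_mul,
        hA, hB, neg_mul_neg, neg_mul_neg, neg_sub] }

/-- The `i`-th coordinate factor `L_i = {x : x_j = 0 for j ≠ i}` of the direct product of
`m` copies of `so(3,ℝ)`, as a Lie subalgebra. -/
def coordFactor (m : ℕ) (i : Fin m) : LieSubalgebra ℝ (⨁ _ : Fin m, so3) :=
  { carrier := {x : ⨁ _ : Fin m, so3 | ∀ j, j ≠ i → x j = 0}
    add_mem' := by
      intro x y hx hy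
      simp only [Set.mem_setOf_eq] at *
      intro j hj
      rw [DirectSum.add_apply, hx j hj, hy j hj, add_zero]
    zero_mem' := by
      simp only [Set.mem_setOf_eq]
      intro j hj
      rfl
    smul_mem' := by
      intro c x hx
      simp only [Set.mem_setOf_eq] at *
      intro j hj
      rw [DirectSum.smul_apply, hx j hj, smul_zero]
    lie_mem' := by
      intro x y hx hy
      simp only [Set.mem_setOf_eq] at *
      intro j hj
      rw [DirectSum.bracket_apply, hx j hj, zero_lie] }

/-- The centralizer `{y : ⁅y, k⁆ = 0 for all k ∈ K}` of a Lie subalgebra `K`, as a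
submodule. -/
def centralizerSubmodule (L : Type*) [LieRing L] [LieAlgebra ℝ L]
    (K : LieSubalgebra ℝ L) : Submodule ℝ L :=
  { carrier := {y : L | ∀ k ∈ K, ⁅y, k⁆ = 0}
    add_mem' := by
      intro a b ha hb
      simp only [Set.mem_setOf_eq] at *
      intro k hk
      rw [add_lie, ha k hk, hb k hk, add_zero]
    zero_mem' := by
      simp only [Set.mem_setOf_eq]
      intro k hk
      rw [zero_lie]
    smul_mem' := by
      intro c a ha
      simp only [Set.mem_setOf_eq] at *
      intro k hk
      rw [smul_lie, ha k hk, smul_zero] }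

/-!
Under the hat isomorphism `(ℝ³, ×) ≅ so(3)`, an element commuting with a nonzero `A` is parallel
to `A`. Projecting `K` to the factors, the centralizer of `K` embeds into the product of the
centralizers of the projections `Kᵢ`, so it has dimension at most `3m − 2s`, where `s` is the
number of `i` with `Kᵢ ≠ 0`. Since `K ≠ 0`, dimension `3(m − 1)` forces `s = 1`: `K` lies in a
single factor `L_i`, and equals it because both are 3-dimensional.
-/

def so3Hat : (Fin 3 → ℝ) ≃ₗ[ℝ] so3 where
  toFun v := ⟨!![0, -v 2, v 1; v 2, 0, -v 0; -v 1, v 0, 0], by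
    ext i j; fin_cases i <;> fin_cases j <;> simp⟩
  map_add' u v := by ext i j; fin_cases i <;> fin_cases j <;> simp <;> ring
  map_smul' c v := by ext i j; fin_cases i <;> fin_cases j <;> simp
  invFun A := ![A.1 2 1, A.1 0 2, A.1 1 0]
  left_inv v := by ext j; fin_cases j <;> simp
  right_inv A := by
    have h : ∀ i j, A.1 j i = -A.1 i j := fun i j => by
      simpa using congrFun (congrFun A.2 i) j
    ext i j
    fin_cases i <;> fin_cases j <;> simp [h 0 1, h 0 2, h 1 2] <;> linarith [h 0 0, h 1 1, h 2 2]

lemma so3Hat_cross (u v : Fin 3 → ℝ) : so3Hat (u ⨯₃ v) = ⁅so3Hat u, so3Hat v⁆ := by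
  ext i j
  fin_cases i <;> fin_cases j <;>
    simp [so3Hat, cross_apply, Ring.lie_def] <;> ring

instance : FiniteDimensional ℝ so3 := Module.Finite.equiv so3Hat

lemma finrank_so3 : Module.finrank ℝ so3 = 3 := by
  simp [← so3Hat.finrank_eq]

lemma so3.mem_span_singleton_of_lie_eq_zero {A B : so3} (hA : A ≠ 0) (h : ⁅B, A⁆ = 0) :
    B ∈ Submodule.span ℝ {A} := by
  obtain ⟨a, rfl⟩ := so3Hat.surjective A
  obtain ⟨b, rfl⟩ := so3Hat.surjective B
  have ha : a ≠ 0 := by rintro rfl; simp at hA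
  have hab : a ⨯₃ b = 0 := by
    rw [← cross_anticomm, neg_eq_zero, ← so3Hat.map_eq_zero_iff, so3Hat_cross, h]
  obtain ⟨c, rfl⟩ : ∃ c : ℝ, c • a = b := by
    by_contra! hc
    exact crossProduct_ne_zero_iff_linearIndependent.mpr
      ((LinearIndependent.pair_iff' ha).mpr hc) hab
  exact Submodule.mem_span_singleton.mpr ⟨c, (map_smul so3Hat c a).symm⟩

lemma finrank_centralizerSubmodule_so3_le_one {K : LieSubalgebra ℝ so3} (hK : K ≠ ⊥) :
    Module.finrank ℝ (centralizerSubmodule so3 K) ≤ 1 := by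
  obtain ⟨A, hAK, hA⟩ : ∃ A ∈ K, A ≠ 0 := by simpa [LieSubalgebra.eq_bot_iff] using hK
  calc Module.finrank ℝ (centralizerSubmodule so3 K)
      ≤ Module.finrank ℝ (Submodule.span ℝ {A}) :=
        Submodule.finrank_mono fun B hB => so3.mem_span_singleton_of_lie_eq_zero hA (hB A hAK)
    _ = 1 := finrank_span_singleton hA

section DirectSum

variable {ι : Type*} {L : ι → Type*} [∀ i, LieRing (L i)] [∀ i, LieAlgebra ℝ (L i)]

lemma finrank_centralizerSubmodule_le_sum [Fintype ι] [∀ i, FiniteDimensional ℝ (L i)]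
    (K : LieSubalgebra ℝ (⨁ i, L i)) :
    Module.finrank ℝ (centralizerSubmodule (⨁ i, L i) K) ≤
      ∑ i, Module.finrank ℝ (centralizerSubmodule (L i) (K.map (lieAlgebraComponent ℝ ι L i))) := by
  let restrict : centralizerSubmodule (⨁ i, L i) K →ₗ[ℝ]
      ∀ i, centralizerSubmodule (L i) (K.map (lieAlgebraComponent ℝ ι L i)) :=
    LinearMap.pi fun i => LinearMap.codRestrict _
      ((component ℝ ι L i).comp (Submodule.subtype _)) fun y => by
        rintro _ ⟨k, hk, rfl⟩
        show ⁅(y : ⨁ i, L i) i, k i⁆ = 0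
        rw [← bracket_apply, y.2 k hk, DirectSum.zero_apply]
  have h_inj : Function.Injective restrict := by
    intro y z h
    ext i : 2
    exact congrArg Subtype.val (congrFun h i)
  simpa only [Module.finrank_pi_fintype] using LinearMap.finrank_le_finrank_of_injective h_inj

lemma exists_map_lieAlgebraComponent_ne_bot {K : LieSubalgebra ℝ (⨁ i, L i)} (hK : K ≠ ⊥) :
    ∃ i, K.map (lieAlgebraComponent ℝ ι L i) ≠ ⊥ := by
  by_contra! h
  refine hK ((LieSubalgebra.eq_bot_iff K).mpr fun k hk => DirectSum.ext fun i => ?_)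
  exact (LieSubalgebra.eq_bot_iff _).mp (h i) _ ⟨k, hk, rfl⟩

end DirectSum

lemma le_coordFactor_of_map_eq_bot {m : ℕ} {K : LieSubalgebra ℝ (⨁ _ : Fin m, so3)} {i : Fin m}
    (h : ∀ j ≠ i, K.map (lieAlgebraComponent ℝ (Fin m) (fun _ => so3) j) = ⊥) :
    K ≤ coordFactor m i :=
  fun k hk j hj => (LieSubalgebra.eq_bot_iff _).mp (h j hj) _ ⟨k, hk, rfl⟩

lemma finrank_coordFactor_le (m : ℕ) (i : Fin m) :
    Module.finrank ℝ (coordFactor m i) ≤ 3 := by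
  have h_inj : Function.Injective
      ((component ℝ (Fin m) (fun _ => so3) i).comp (coordFactor m i).toSubmodule.subtype) := by
    refine (injective_iff_map_eq_zero _).mpr fun x hx => Subtype.ext (DirectSum.ext fun j => ?_)
    by_cases hj : j = i
    · exact hj ▸ hx
    · exact x.2 j hj
  exact (LinearMap.finrank_le_finrank_of_injective h_inj).trans_eq finrank_so3

lemma sum_add_mul_card_filter_le {ι : Type*} [Fintype ι] (p : ι → Prop) [DecidablePred p]
    {f : ι → ℕ} {a b : ℕ} (hf : ∀ i, f i ≤ a) (hp : ∀ i, p i → f i + b ≤ a) :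
    ∑ i, f i + b * (Finset.univ.filter p).card ≤ a * Fintype.card ι := by
  rw [Finset.card_filter, Finset.mul_sum, ← Finset.sum_add_distrib, mul_comm, ← smul_eq_mul,
    ← Finset.card_univ, ← Finset.sum_const]
  refine Finset.sum_le_sum fun i _ => ?_
  split_ifs with hi
  · simpa using hp i hi
  · simpa using hf i

theorem coordinate_factors_canonical_general (m : ℕ)
    (K : LieSubalgebra ℝ (⨁ _ : Fin m, so3))
    (hK : Module.finrank ℝ K = 3)
    (hC : Module.finrank ℝ (centralizerSubmodule (⨁ _ : Fin m, so3) K) = 3 * (m - 1)) :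
    ∃ i : Fin m, K = coordFactor m i := by
  classical
  set π := lieAlgebraComponent ℝ (Fin m) (fun _ => so3)
  set S := Finset.univ.filter fun i => K.map (π i) ≠ ⊥
  have hK_ne_bot : K ≠ ⊥ := by
    rintro rfl
    have := LieSubalgebra.subsingleton_bot (R := ℝ) (L := ⨁ _ : Fin m, so3)
    rw [Module.finrank_zero_of_subsingleton] at hK
    omega
  have hS_pos : 0 < S.card := by
    obtain ⟨i, hi⟩ := exists_map_lieAlgebraComponent_ne_bot hK_ne_bot
    exact Finset.card_pos.mpr ⟨i, Finset.mem_filter.mpr ⟨Finset.mem_univ i, hi⟩⟩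
  have hS_le : 3 * (m - 1) + 2 * S.card ≤ 3 * m := by
    rw [← hC]
    calc _ ≤ ∑ i, Module.finrank ℝ (centralizerSubmodule so3 (K.map (π i))) + 2 * S.card := by
          gcongr; exact finrank_centralizerSubmodule_le_sum K
      _ ≤ 3 * Fintype.card (Fin m) :=
          sum_add_mul_card_filter_le _ (fun i => (Submodule.finrank_le _).trans_eq finrank_so3)
            fun i hi => by have := finrank_centralizerSubmodule_so3_le_one hi; omega
      _ = 3 * m := by rw [Fintype.card_fin]
  obtain ⟨i, hSi⟩ := Finset.card_eq_one.mp (by omega : S.card = 1)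
  have hle : K ≤ coordFactor m i := le_coordFactor_of_map_eq_bot fun j hj => by
    by_contra h
    exact hj (Finset.mem_singleton.mp (hSi ▸ Finset.mem_filter.mpr ⟨Finset.mem_univ j, h⟩))
  exact ⟨i, LieSubalgebra.toSubmodule_injective <|
    Submodule.eq_of_le_of_finrank_le hle ((finrank_coordFactor_le m i).trans hK.ge)⟩

/-- in the direct product of `m` copies of `so(3,ℝ)`, a 3-dimensional Lie
subalgebra whose centralizer has dimension `3(m−1)` is one of the coordinate factors. -/
theorem coordinate_factors_canonical (m : ℕ) (hm : 1 ≤ m)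
    (K : LieSubalgebra ℝ (⨁ _ : Fin m, so3))
    (hK : Module.finrank ℝ K = 3)
    (hC : Module.finrank ℝ (centralizerSubmodule (⨁ _ : Fin m, so3) K) = 3 * (m - 1)) :
    ∃ i : Fin m, K = coordFactor m i :=
  coordinate_factors_canonical_general m K hK hC
end
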